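/- arXiv:1111.4157 — 3 statements merged into one kernel-verified Lean document; each statement's English description precedes it below -/
import Mathlib

section
/- For every natural number n ≥ 1 and every real λ, the determinants B_n(λ) = det(A_n − λI) satisfy the three-term recurrence B_{n+1}(λ) = −λ·B_n(λ) − n·B_{n−1}(λ), with base cases B_1(λ) = −λ and B_2(λ) = λ² − 1 (where B_0(λ) = 1). -/
open Polynomial Matrix

/-- The `n × n` tridiagonal matrix `A_n` with zero diagonal, subdiagonal entries `1`,
and superdiagonal entries `(A_n)_{i,i+1} = i + 1`. -/
noncomputable def hermMatrix (n : ℕ) : Matrix (Fin n) (Fin n) ℝ :=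
  Matrix.of fun i j =>
    if (j : ℕ) = (i : ℕ) + 1 then ((i : ℕ) + 1 : ℝ)
    else if (i : ℕ) = (j : ℕ) + 1 then 1
    else 0

/-- `B_n(λ) = det (A_n - λ I)`.  (For `n = 0` this is the determinant of the empty
matrix, namely `1`.) -/
noncomputable def Bdet (n : ℕ) (l : ℝ) : ℝ :=
  (hermMatrix n - l • (1 : Matrix (Fin n) (Fin n) ℝ)).det

/-!
Expanding `det (A_n - λ I)` along its last row leaves two minors: the one at the diagonal entry
`-λ` is `B_{n-1}`, and the one at the subdiagonal entry `1` has a single nonzero entry `n` in its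
last column, whose complementary minor is `B_{n-2}`. This is the classical continuant recurrence
for tridiagonal determinants.
-/

namespace Matrix

variable {R : Type*} [CommRing R] {n : ℕ}

theorem det_succ_of_col_last_eq_zero (A : Matrix (Fin (n + 1)) (Fin (n + 1)) R)
    (h : ∀ i : Fin n, A i.castSucc (Fin.last n) = 0) :
    A.det = A (Fin.last n) (Fin.last n) * (A.submatrix Fin.castSucc Fin.castSucc).det := by
  rw [det_succ_column A (Fin.last n), Fin.sum_univ_castSucc,
    Finset.sum_eq_zero fun i _ => by rw [h i, mul_zero, zero_mul], zero_add,
    Fin.succAbove_last, ← two_mul, pow_mul, neg_one_sq, one_pow, one_mul]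

theorem det_succ_succ_of_row_last_eq_zero (A : Matrix (Fin (n + 2)) (Fin (n + 2)) R)
    (h : ∀ j : Fin n, A (Fin.last (n + 1)) j.castSucc.castSucc = 0) :
    A.det = A (Fin.last (n + 1)) (Fin.last (n + 1)) * (A.submatrix Fin.castSucc Fin.castSucc).det
      - A (Fin.last (n + 1)) (Fin.last n).castSucc *
        (A.submatrix Fin.castSucc (Fin.last n).castSucc.succAbove).det := by
  rw [det_succ_row A (Fin.last (n + 1)), Fin.sum_univ_castSucc, Fin.sum_univ_castSucc,
    Finset.sum_eq_zero fun j _ => by rw [h j, mul_zero, zero_mul], zero_add,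
    Fin.succAbove_last]
  have hodd : ((-1 : R)) ^ ((Fin.last (n + 1) : ℕ) + ((Fin.last n).castSucc : ℕ)) = -1 := by
    simp [show n + 1 + n = 2 * n + 1 by ring, pow_succ, pow_mul]
  have heven : ((-1 : R)) ^ ((Fin.last (n + 1) : ℕ) + (Fin.last (n + 1) : ℕ)) = 1 := by
    rw [← two_mul, pow_mul, neg_one_sq, one_pow]
  rw [hodd, heven]
  ring

def tridiagonal (d a b : ℕ → R) (n : ℕ) : Matrix (Fin n) (Fin n) R :=
  of fun i j =>
    if (j : ℕ) = i + 1 then a i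
    else if (i : ℕ) = j + 1 then b j
    else if i = j then d i
    else 0

variable (d a b : ℕ → R)

theorem tridiagonal_apply_self (i : Fin n) : tridiagonal d a b n i i = d i := by
  simp [tridiagonal]

theorem tridiagonal_apply_of_val_eq_succ {i j : Fin n} (h : (j : ℕ) = i + 1) :
    tridiagonal d a b n i j = a i := by
  simp [tridiagonal, h]

theorem tridiagonal_apply_of_val_succ_eq {i j : Fin n} (h : (i : ℕ) = j + 1) :
    tridiagonal d a b n i j = b j := by
  simp only [tridiagonal, of_apply]
  rw [if_neg (by omega), if_pos h]

theorem tridiagonal_apply_eq_zero {i j : Fin n} (h : (i : ℕ) + 1 < j ∨ (j : ℕ) + 1 < i) :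
    tridiagonal d a b n i j = 0 := by
  simp only [tridiagonal, of_apply, Fin.ext_iff]
  split_ifs <;> first | rfl | omega

@[simp]
theorem tridiagonal_submatrix_castSucc :
    (tridiagonal d a b (n + 1)).submatrix Fin.castSucc Fin.castSucc = tridiagonal d a b n := by
  ext i j
  simp [tridiagonal]

theorem det_tridiagonal_submatrix_succAbove_castSucc_last :
    ((tridiagonal d a b (n + 2)).submatrix Fin.castSucc (Fin.last n).castSucc.succAbove).det =
      a n * (tridiagonal d a b n).det := by
  have hsub : ((tridiagonal d a b (n + 2)).submatrix Fin.castSucc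
      (Fin.last n).castSucc.succAbove).submatrix Fin.castSucc Fin.castSucc =
        tridiagonal d a b n := by
    ext i j
    simp [Fin.succAbove_castSucc_of_lt _ _ (Fin.castSucc_lt_last j), tridiagonal]
  rw [det_succ_of_col_last_eq_zero, hsub]
  · simp only [submatrix_apply, Fin.succAbove_castSucc_self, Fin.succ_last]
    rw [tridiagonal_apply_of_val_eq_succ _ _ _ (by simp)]
    simp
  · intro i
    simp only [submatrix_apply, Fin.succAbove_castSucc_self, Fin.succ_last]
    exact tridiagonal_apply_eq_zero _ _ _ (by simp)

theorem det_tridiagonal_succ_succ :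
    (tridiagonal d a b (n + 2)).det =
      d (n + 1) * (tridiagonal d a b (n + 1)).det - a n * b n * (tridiagonal d a b n).det := by
  rw [det_succ_succ_of_row_last_eq_zero, det_tridiagonal_submatrix_succAbove_castSucc_last,
    tridiagonal_submatrix_castSucc, tridiagonal_apply_self,
    tridiagonal_apply_of_val_succ_eq _ _ _ (by simp)]
  · simp only [Fin.val_last, Fin.val_castSucc]
    ring
  · exact fun j => tridiagonal_apply_eq_zero _ _ _ (by simp)

end Matrix

theorem hermMatrix_sub_smul_one (n : ℕ) (l : ℝ) :
    hermMatrix n - l • (1 : Matrix (Fin n) (Fin n) ℝ) =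
      tridiagonal (fun _ => -l) (fun i => (i : ℝ) + 1) (fun _ => 1) n := by
  ext i j
  by_cases hij : i = j
  · subst hij
    simp [hermMatrix, tridiagonal]
  · simp [hermMatrix, tridiagonal, hij]

theorem Bdet_add_two (n : ℕ) (l : ℝ) :
    Bdet (n + 2) l = -l * Bdet (n + 1) l - ((n : ℝ) + 1) * Bdet n l := by
  simp only [Bdet, hermMatrix_sub_smul_one, det_tridiagonal_succ_succ, mul_one]

theorem stmt_1_general (n : ℕ) (l : ℝ) :
    Bdet (n + 1) l = -l * Bdet n l - (n : ℝ) * Bdet (n - 1) l ∧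
    Bdet 0 l = 1 ∧ Bdet 1 l = -l ∧ Bdet 2 l = l ^ 2 - 1 := by
  have h0 : Bdet 0 l = 1 := det_isEmpty
  have h1 : Bdet 1 l = -l := by simp [Bdet, hermMatrix_sub_smul_one, tridiagonal]
  refine ⟨?_, h0, h1, by simp [Bdet_add_two, h0, h1]; ring⟩
  rcases n with _ | n
  · simp [h0, h1]
  · simp [Bdet_add_two]

/-- The determinants `B_n(λ) = det (A_n - λ I)` satisfy the three-term recurrence
`B_{n+1} = -λ B_n - n B_{n-1}` for `n ≥ 1`, with `B_0 = 1`, `B_1 = -λ`, `B_2 = λ² - 1`. -/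
theorem stmt_1 (n : ℕ) (hn : 1 ≤ n) (l : ℝ) :
    Bdet (n + 1) l = -l * Bdet n l - (n : ℝ) * Bdet (n - 1) l ∧
    Bdet 0 l = 1 ∧ Bdet 1 l = -l ∧ Bdet 2 l = l ^ 2 - 1 :=
  stmt_1_general n l
end

section
/- For every natural number n, every complex root of the n-th probabilist's Hermite polynomial H_n is real (has imaginary part zero). -/
/-!
The Hermite polynomials satisfy the three-term recurrence `H (n+2) = X * H (n+1) - (n+1) * H n`.
For any such recurrence `w (n+2) = (z - b) * w (n+1) - c * w n` with real `b` and `c > 0`, the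
Christoffel–Darboux identity `w (n+1) * conj (w n) - w n * conj (w (n+1)) = (z - conj z) * S n`
holds with `S n = |w n|² + c * S (n-1) > 0`. At a root `w (n+1) = 0` the left side vanishes,
so `z = conj z`.
-/

open Polynomial Complex ComplexConjugate

namespace Polynomial

theorem derivative_hermite_succ (n : ℕ) :
    derivative (hermite (n + 1)) = (n + 1 : ℤ[X]) * hermite n := by
  induction n with
  | zero => simp [hermite_zero]
  | succ m ih =>
    rw [hermite_succ (m + 1), derivative_sub, derivative_mul, derivative_X, one_mul, ih,
      derivative_mul, hermite_succ m]
    simp only [derivative_natCast, derivative_one, derivative_add]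
    push_cast
    ring

theorem hermite_add_two (n : ℕ) :
    hermite (n + 2) = X * hermite (n + 1) - (n + 1 : ℤ[X]) * hermite n := by
  rw [hermite_succ (n + 1), derivative_hermite_succ]

end Polynomial

section ThreeTermRecurrence

variable {z : ℂ} {w : ℕ → ℂ} {b c : ℕ → ℝ}

noncomputable def christoffelDarbouxSum (w : ℕ → ℂ) (c : ℕ → ℝ) : ℕ → ℝ
  | 0 => normSq (w 0)
  | n + 1 => normSq (w (n + 1)) + c n * christoffelDarbouxSum w c n

theorem christoffelDarbouxSum_pos (hw : w 0 ≠ 0) (hc : ∀ n, 0 < c n) (n : ℕ) :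
    0 < christoffelDarbouxSum w c n := by
  induction n with
  | zero => exact normSq_pos.mpr hw
  | succ m ih =>
    exact add_pos_of_nonneg_of_pos (normSq_nonneg _) (mul_pos (hc m) ih)

theorem christoffel_darboux (h₁ : w 1 = (z - b 0) * w 0)
    (hrec : ∀ n, w (n + 2) = (z - b (n + 1)) * w (n + 1) - c n * w n) (n : ℕ) :
    w (n + 1) * conj (w n) - w n * conj (w (n + 1)) =
      (z - conj z) * christoffelDarbouxSum w c n := by
  induction n with
  | zero =>
    rw [h₁, christoffelDarbouxSum, map_mul, ← mul_conj]
    simp only [map_sub, conj_ofReal]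
    ring
  | succ m ih =>
    have hnorm : w (m + 1) * conj (w (m + 1)) = (normSq (w (m + 1)) : ℂ) := mul_conj _
    rw [hrec, christoffelDarbouxSum]
    simp only [map_sub, map_mul, conj_ofReal, ofReal_add, ofReal_mul]
    linear_combination (z - conj z) * hnorm + (c m : ℂ) * ih

theorem im_eq_zero_of_threeTermRecurrence (hw : w 0 ≠ 0) (hc : ∀ n, 0 < c n)
    (h₁ : w 1 = (z - b 0) * w 0)
    (hrec : ∀ n, w (n + 2) = (z - b (n + 1)) * w (n + 1) - c n * w n) {n : ℕ} (hn : w n = 0) :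
    z.im = 0 := by
  obtain _ | m := n
  · exact absurd hn hw
  have hS : (christoffelDarbouxSum w c m : ℂ) ≠ 0 :=
    ofReal_ne_zero.mpr (christoffelDarbouxSum_pos hw hc m).ne'
  have hcd := christoffel_darboux h₁ hrec m
  rw [hn, zero_mul, map_zero, mul_zero, sub_zero, eq_comm, mul_eq_zero] at hcd
  exact conj_eq_iff_im.mp (sub_eq_zero.mp (hcd.resolve_right hS)).symm

end ThreeTermRecurrence

/-- Every complex root of the `n`-th probabilist's Hermite polynomial is real. -/
theorem stmt_7 (n : ℕ) (z : ℂ)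
    (hz : Polynomial.aeval z (Polynomial.hermite n) = 0) :
    z.im = 0 := by
  refine im_eq_zero_of_threeTermRecurrence (w := fun k ↦ aeval z (hermite k))
    (b := 0) (c := fun k ↦ k + 1) (by simp [hermite_zero]) (fun k ↦ by positivity)
    (by simp [hermite_zero]) (fun k ↦ ?_) hz
  rw [hermite_add_two]
  simp
end

section
/- Let μ be a Borel probability measure on ℝ whose cumulative distribution function F is continuous, let P be a natural number, let x₀ ∈ ℝ and let x_{jk} ∈ ℝ for 0 ≤ j ≤ P, 0 ≤ k < 2^j, and define x(λ) = x₀ + Σ_{j=0}^{P} Σ_{k=0}^{2^j−1} x_{jk}·ψ_{jk}(F(λ)). Then the mean of x under μ equals the leading coefficient: ∫ x(λ) dμ(λ) = x₀. -/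
/-!
Because `F` is a continuous cdf, it pushes `μ` forward to the uniform distribution on `[0, 1]`
(the probability integral transform), so `∫ g(F(λ)) dμ(λ) = ∫₀¹ g(u) du`. For `k < 2 ^ j` the
wavelet `ψ_{jk}` is supported in `[0, 1]`, and its integral over `ℝ` vanishes because it is a
rescaled translate of `ψ`, whose two halves cancel. Only the constant `x₀` survives.
-/

open MeasureTheory

/-- The Haar mother wavelet: `1` on `[0, 1/2)`, `-1` on `[1/2, 1)`, `0` elsewhere. -/
noncomputable def motherHaar (u : ℝ) : ℝ :=
  if 0 ≤ u ∧ u < 1 / 2 then 1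
  else if 1 / 2 ≤ u ∧ u < 1 then -1
  else 0

/-- The Haar wavelet `ψ_{jk}(u) = 2^{j/2} ψ(2^j u - k)`. -/
noncomputable def haarW (j k : ℕ) (u : ℝ) : ℝ :=
  (2 : ℝ) ^ ((j : ℝ) / 2) * motherHaar ((2 : ℝ) ^ j * u - (k : ℝ))

open Set ProbabilityTheory

section ProbabilityIntegralTransform

variable (μ : Measure ℝ) [IsProbabilityMeasure μ]

theorem measure_preimage_cdf_Iic_of_lt_one (hc : Continuous (cdf μ)) {p : ℝ} (hp : p < 1) :
    μ (cdf μ ⁻¹' Iic p) = ENNReal.ofReal p := by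
  set A := cdf μ ⁻¹' Iic p
  rcases A.eq_empty_or_nonempty with hA | hA
  · have hpF : ∀ t, p ≤ cdf μ t := fun t ↦ le_of_lt <| not_le.1 fun ht ↦ hA.subset ht
    rw [hA, measure_empty, ENNReal.ofReal_of_nonpos (ge_of_tendsto' (tendsto_cdf_atBot μ) hpF)]
  have hbdd : BddAbove A := by
    obtain ⟨u, hu⟩ := ((tendsto_cdf_atTop μ).eventually_const_lt hp).exists
    exact ⟨u, fun t ht ↦ le_of_not_gt fun hut ↦ (hu.trans_le (monotone_cdf μ hut.le)).not_ge ht⟩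
  set s := sSup A
  have hsA : s ∈ A := (isClosed_Iic.preimage hc).csSup_mem hA hbdd
  have hA_eq : A = Iic s :=
    Set.ext fun t ↦ ⟨fun ht ↦ le_csSup hbdd ht, fun ht ↦ (monotone_cdf μ ht).trans hsA⟩
  -- points right of `s` lie outside `A`; pass to the limit from the right
  have hps : p ≤ cdf μ s :=
    ge_of_tendsto (hc.continuousAt.tendsto.mono_left nhdsWithin_le_nhds) <|
      eventually_nhdsWithin_of_forall (s := Ioi s) fun t ht ↦
        le_of_lt <| not_le.1 fun htA ↦ (hA_eq ▸ htA : t ∈ Iic s).not_gt (mem_Ioi.1 ht)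
  rw [hA_eq, ← ofReal_cdf, le_antisymm hsA hps]

/-- The probability integral transform. -/
theorem map_cdf_eq_volume_restrict_Icc (hc : Continuous (cdf μ)) :
    μ.map (cdf μ) = volume.restrict (Icc 0 1) := by
  refine Measure.ext_of_Iic _ _ fun p ↦ ?_
  rw [Measure.map_apply hc.measurable measurableSet_Iic, Measure.restrict_apply measurableSet_Iic]
  rcases lt_or_ge p 1 with hp | hp
  · have : Iic p ∩ Icc 0 1 = Icc 0 p := by
      ext t
      simp only [mem_inter_iff, mem_Iic, mem_Icc]
      exact ⟨fun h ↦ ⟨h.2.1, h.1⟩, fun h ↦ ⟨h.2, h.1, h.2.trans hp.le⟩⟩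
    rw [measure_preimage_cdf_Iic_of_lt_one μ hc hp, this, Real.volume_Icc, sub_zero]
  · have hpre : cdf μ ⁻¹' Iic p = univ :=
      eq_univ_of_forall fun t ↦ (cdf_le_one μ t).trans hp
    rw [hpre, measure_univ, inter_eq_right.2 (Icc_subset_Iic_self.trans (Iic_subset_Iic.2 hp)),
      Real.volume_Icc, sub_zero, ENNReal.ofReal_one]

theorem integral_comp_cdf {E : Type*} [NormedAddCommGroup E] [NormedSpace ℝ E]
    (hc : Continuous (cdf μ)) {f : ℝ → E} (hf : AEStronglyMeasurable f (volume.restrict (Icc 0 1))) :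
    ∫ t, f (cdf μ t) ∂μ = ∫ u in Icc 0 1, f u := by
  rw [← map_cdf_eq_volume_restrict_Icc μ hc] at hf ⊢
  exact (integral_map hc.aemeasurable hf).symm

end ProbabilityIntegralTransform

section Haar

theorem motherHaar_eq_indicator_sub :
    motherHaar = (Ico 0 (1 / 2)).indicator 1 - (Ico (1 / 2) 1).indicator 1 := by
  ext u
  simp only [motherHaar, Pi.sub_apply, indicator_apply, mem_Ico, Pi.one_apply]
  split_ifs with h₁ h₂ <;> first | linarith [h₁.2, h₂.1] | norm_num

theorem integrable_indicator_one_Ico (a b : ℝ) : Integrable ((Ico a b).indicator (1 : ℝ → ℝ)) :=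
  (integrableOn_const (C := (1 : ℝ)) measure_Ico_lt_top.ne).integrable_indicator measurableSet_Ico

theorem integrable_motherHaar : Integrable motherHaar := by
  rw [motherHaar_eq_indicator_sub]
  exact (integrable_indicator_one_Ico _ _).sub (integrable_indicator_one_Ico _ _)

theorem integral_motherHaar : ∫ u, motherHaar u = 0 := by
  rw [motherHaar_eq_indicator_sub]
  simp only [Pi.sub_apply]
  rw [integral_sub (integrable_indicator_one_Ico _ _) (integrable_indicator_one_Ico _ _),
    integral_indicator_one measurableSet_Ico, integral_indicator_one measurableSet_Ico]
  simp only [measureReal_def, Real.volume_Ico]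
  norm_num

theorem motherHaar_eq_zero_of_notMem {u : ℝ} (hu : u ∉ Ico 0 1) : motherHaar u = 0 := by
  simp only [mem_Ico, not_and_or, not_le, not_lt] at hu
  unfold motherHaar
  rcases hu with hu | hu
  · rw [if_neg (by linarith [·.1]), if_neg (by linarith [·.1])]
  · rw [if_neg (by linarith [·.2]), if_neg (by linarith [·.2])]

theorem integrable_haarW (j k : ℕ) : Integrable (haarW j k) :=
  ((integrable_motherHaar.comp_sub_right (k : ℝ)).comp_mul_left'
    (pow_ne_zero j two_ne_zero)).const_mul _

theorem integral_haarW (j k : ℕ) : ∫ u, haarW j k u = 0 := by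
  simp only [haarW, integral_const_mul,
    Measure.integral_comp_mul_left (fun v ↦ motherHaar (v - k)),
    integral_sub_right_eq_self, integral_motherHaar, smul_zero, mul_zero]

theorem haarW_eq_zero_of_notMem {j k : ℕ} (hk : k < 2 ^ j) {u : ℝ} (hu : u ∉ Icc 0 1) :
    haarW j k u = 0 := by
  refine mul_eq_zero_of_right _ (motherHaar_eq_zero_of_notMem fun hv ↦ hu ?_)
  have hk' : (k : ℝ) + 1 ≤ 2 ^ j := by exact_mod_cast hk
  have h2 : (0 : ℝ) < 2 ^ j := by positivity
  simp only [mem_Ico, mem_Icc] at hv ⊢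
  constructor
  · nlinarith [hv.1]
  · nlinarith [hv.2]

theorem setIntegral_Icc_haarW {j k : ℕ} (hk : k < 2 ^ j) : ∫ u in Icc 0 1, haarW j k u = 0 := by
  rw [setIntegral_eq_integral_of_forall_compl_eq_zero fun _ ↦ haarW_eq_zero_of_notMem hk,
    integral_haarW]

end Haar

/-- For the truncated Wiener–Haar expansion
`x(λ) = x₀ + ∑_{j=0}^{P} ∑_{k=0}^{2^j-1} x_{jk} ψ_{jk}(F(λ))`, the mean of `x` under
`μ` is the leading coefficient `x₀`. -/
theorem stmt_12 (μ : Measure ℝ) [IsProbabilityMeasure μ]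
    (F : ℝ → ℝ) (hF : ∀ t : ℝ, F t = (μ (Set.Iic t)).toReal) (hFc : Continuous F)
    (P : ℕ) (x₀ : ℝ) (x : ℕ → ℕ → ℝ) :
    ∫ t, (x₀ + ∑ j ∈ Finset.range (P + 1), ∑ k ∈ Finset.range (2 ^ j),
        x j k * haarW j k (F t)) ∂μ = x₀ := by
  obtain rfl : F = cdf μ := funext fun t ↦ by rw [hF, cdf_eq_real, measureReal_def]
  have hterm (j k : ℕ) : IntegrableOn (fun u ↦ x j k * haarW j k u) (Icc 0 1) :=
    ((integrable_haarW j k).const_mul _).integrableOn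
  have hsum (j : ℕ) : IntegrableOn (fun u ↦ ∑ k ∈ Finset.range (2 ^ j), x j k * haarW j k u)
      (Icc 0 1) := integrable_finsetSum _ fun k _ ↦ hterm j k
  have hg : IntegrableOn (fun u ↦ x₀ + ∑ j ∈ Finset.range (P + 1),
      ∑ k ∈ Finset.range (2 ^ j), x j k * haarW j k u) (Icc 0 1) :=
    (integrable_const _).add (integrable_finsetSum _ fun j _ ↦ hsum j)
  rw [integral_comp_cdf μ hFc hg.1, integral_add (integrable_const _)
      (integrable_finsetSum _ fun j _ ↦ hsum j), integral_finsetSum _ fun j _ ↦ hsum j]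
  refine (add_eq_left.2 (Finset.sum_eq_zero fun j _ ↦ ?_)).trans (by simp)
  rw [integral_finsetSum _ fun k _ ↦ hterm j k]
  refine Finset.sum_eq_zero fun k hk ↦ ?_
  rw [integral_const_mul, setIntegral_Icc_haarW (Finset.mem_range.1 hk), mul_zero]
end
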